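/- Let P be an integer such that P² + 4 is squarefree, and set A = P² + 2 and B = P⁴ + 4P² + 1. For every positive integer n with n > (|A| + |B|)³, if σ₂(n) − n² = A·n + B (as integers), then there exists an integer k ≥ 1 such that n = V_{2k−1}(P,−1) · V_{2k+1}(P,−1), where both V_{2k−1}(P,−1) and V_{2k+1}(P,−1) are prime numbers. -/
import Mathlib


/-- Lucas sequence of the second kind: `V 0 = 2`, `V 1 = P`,
`V (n+2) = P * V (n+1) - Q * V n`. -/
def lucasV (P Q : ℤ) : ℕ → ℤ
  | 0 => 2
  | 1 => P
  | n + 2 => P * lucasV P Q (n + 1) - Q * lucasV P Q n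

lemma lucasV_rec (P : ℤ) (m : ℕ) :
    lucasV P (-1) (m + 4) = (P ^ 2 + 2) * lucasV P (-1) (m + 2) - lucasV P (-1) m := by
  show lucasV P (-1) (m + 2 + 2) = _
  rw [lucasV, lucasV, lucasV]
  ring

lemma lucasV_neg (P : ℤ) : ∀ m, lucasV (-P) (-1) m = (-1) ^ m * lucasV P (-1) m
  | 0 => by simp [lucasV]
  | 1 => by simp [lucasV]
  | (m + 2) => by
      rw [lucasV, lucasV, lucasV_neg P (m + 1), lucasV_neg P m]
      ring

lemma sf_sq {s c : ℤ} (hs : Squarefree s) (h : s ∣ c ^ 2) : s ∣ c :=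
  (hs.dvd_pow_iff_dvd two_ne_zero).mp h

lemma base_case (P : ℤ) (hP : 1 ≤ P) (hsf : Squarefree (P ^ 2 + 4)) (x u : ℤ)
    (hx : 1 ≤ x) (hu : 1 ≤ u)
    (h : x ^ 2 + (P ^ 2 + 2) * x * u + u ^ 2 = (P ^ 2 + 2) ^ 2 - 4) :
    x = P ∧ u = P := by
  have key : (x - u) ^ 2 = (P ^ 2 + 4) * (P ^ 2 - x * u) := by ring_nf; nlinarith [h]
  have hdvd : (P ^ 2 + 4) ∣ (x - u) := by
    apply sf_sq hsf; exact ⟨_, key⟩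
  obtain ⟨d, hd⟩ := hdvd
  have hs0 : (0:ℤ) < P ^ 2 + 4 := by positivity
  have h2 : P ^ 2 - x * u = (P ^ 2 + 4) * d ^ 2 := by
    have : (P ^ 2 + 4) * (P ^ 2 - x * u) = (P ^ 2 + 4) * ((P ^ 2 + 4) * d ^ 2) := by
      rw [← key, hd]; ring
    exact mul_left_cancel₀ (by positivity) this
  have hd0 : d = 0 := by
    by_contra hne
    have h0 : 0 < d ^ 2 := by positivity
    have : 1 ≤ d ^ 2 := h0
    nlinarith [h2, mul_le_mul_of_nonneg_left this (le_of_lt hs0)]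
  subst hd0
  have hxu : x = u := by nlinarith [hd]
  subst hxu
  have : x ^ 2 = P ^ 2 := by nlinarith [h2]
  have : x = P := by nlinarith [this]
  exact ⟨this, this⟩

lemma classify (P : ℤ) (hP : 1 ≤ P) (hsf : Squarefree (P ^ 2 + 4)) :
    ∀ N : ℕ, ∀ x y : ℤ, x.natAbs ≤ N → 1 ≤ x → x ≤ y →
    x ^ 2 - (P ^ 2 + 2) * x * y + y ^ 2 = (P ^ 2 + 2) ^ 2 - 4 →
    ∃ k : ℕ, 1 ≤ k ∧ x = lucasV P (-1) (2 * k - 1) ∧ y = lucasV P (-1) (2 * k + 1) := by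
  intro N
  induction N with
  | zero =>
    intro x y hxN hx _ _
    omega
  | succ N IH =>
    intro x y hxN hx hxy hE
    have hxlty : x < y := by
      rcases lt_or_eq_of_le hxy with h | h
      · exact h
      · exfalso; subst h; nlinarith
    have hyy' : y * ((P ^ 2 + 2) * x - y) = x ^ 2 - ((P ^ 2 + 2) ^ 2 - 4) := by
      linear_combination -hE
    rcases lt_trichotomy (x ^ 2) ((P ^ 2 + 2) ^ 2 - 4) with hlt | heq0 | hgt
    · -- base case
      have hy2 : 2 ≤ y := by omega
      have hy'neg : (P ^ 2 + 2) * x - y < 0 := by nlinarith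
      have hu1 : 1 ≤ y - (P ^ 2 + 2) * x := by omega
      obtain ⟨hx1, hu⟩ := base_case P hP hsf x (y - (P ^ 2 + 2) * x) hx hu1
        (by linear_combination hE)
      refine ⟨1, le_refl 1, ?_, ?_⟩
      · show x = lucasV P (-1) 1
        simp [lucasV]; exact hx1
      · show y = lucasV P (-1) 3
        have h3 : lucasV P (-1) 3 = P ^ 3 + 3 * P := by simp [lucasV]; ring
        rw [h3]
        linear_combination hu + (P ^ 2 + 2) * hx1
    · -- impossible: x^2 = (P^2+4)*P^2
      exfalso
      have hx2 : x ^ 2 = (P ^ 2 + 4) * P ^ 2 := by linarith [heq0];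
      have hdvd : (P ^ 2 + 4) ∣ x := sf_sq hsf ⟨P ^ 2, hx2⟩
      obtain ⟨d, hd⟩ := hdvd
      have h2 : (P ^ 2 + 4) * d ^ 2 = P ^ 2 := by
        have : (P ^ 2 + 4) * ((P ^ 2 + 4) * d ^ 2) = (P ^ 2 + 4) * P ^ 2 := by
          rw [← hx2, hd]; ring
        exact mul_left_cancel₀ (by positivity) this
      have hd0 : d ≠ 0 := by
        rintro rfl; simp at h2; nlinarith
      have hpos : 0 < d ^ 2 := by positivity
      nlinarith [h2, Int.add_one_le_of_lt hpos]
    · -- descent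
      have hy'pos : 1 ≤ (P ^ 2 + 2) * x - y := by
        rcases lt_or_ge ((P ^ 2 + 2) * x - y) 1 with h | h
        · exfalso
          rcases lt_or_eq_of_le (by omega : (P ^ 2 + 2) * x - y ≤ 0) with h0 | h0
          · nlinarith
          · rw [h0, mul_zero] at hyy'; omega
        · exact h
      have hy'lt : (P ^ 2 + 2) * x - y < x := by nlinarith
      have hE' : ((P ^ 2 + 2) * x - y) ^ 2 - (P ^ 2 + 2) * ((P ^ 2 + 2) * x - y) * x + x ^ 2
          = (P ^ 2 + 2) ^ 2 - 4 := by linear_combination hE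
      have hxN' : ((P ^ 2 + 2) * x - y).natAbs ≤ N := by
        have h1 := Int.natAbs_lt_natAbs_of_nonneg_of_lt (by omega) hy'lt
        omega
      obtain ⟨k, hk, h1, h2⟩ := IH ((P ^ 2 + 2) * x - y) x hxN' hy'pos (le_of_lt hy'lt) hE'
      refine ⟨k + 1, by omega, ?_, ?_⟩
      · have e1 : 2 * (k + 1) - 1 = 2 * k + 1 := by omega
        rw [e1]; exact h2
      · have e2 : 2 * (k + 1) + 1 = (2 * k - 1) + 4 := by omega
        have e3 : 2 * k + 1 = (2 * k - 1) + 2 := by omega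
        rw [e2, lucasV_rec, ← e3, ← h1, ← h2]
        ring

open ArithmeticFunction in
lemma sigma2_lb (n d : ℕ) (hn : 0 < n) (hd : d ∣ n) (hdn : d ≠ n) :
    d ^ 2 + n ^ 2 ≤ sigma 2 n := by
  rw [sigma_apply]
  have hsub : ({d, n} : Finset ℕ) ⊆ n.divisors := by
    intro i hi
    simp only [Finset.mem_insert, Finset.mem_singleton] at hi
    rcases hi with rfl | rfl
    · exact Nat.mem_divisors.mpr ⟨hd, hn.ne'⟩
    · exact Nat.mem_divisors.mpr ⟨dvd_rfl, hn.ne'⟩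
  calc d ^ 2 + n ^ 2 = ∑ i ∈ ({d, n} : Finset ℕ), i ^ 2 := by
        rw [Finset.sum_pair hdn]
    _ ≤ ∑ i ∈ n.divisors, i ^ 2 := Finset.sum_le_sum_of_subset hsub

open ArithmeticFunction in
lemma sigma2_prime (p : ℕ) (hp : p.Prime) : sigma 2 p = 1 + p ^ 2 := by
  rw [sigma_apply, hp.divisors, Finset.sum_pair hp.one_lt.ne]
  ring

open ArithmeticFunction in
lemma sigma2_prime_sq (p : ℕ) (hp : p.Prime) : sigma 2 (p ^ 2) = 1 + p ^ 2 + p ^ 4 := by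
  rw [sigma_apply, Nat.divisors_prime_pow hp]
  simp [Finset.sum_map]
  rw [Finset.sum_range_succ, Finset.sum_range_succ, Finset.sum_range_one]
  ring

open ArithmeticFunction in
lemma sigma2_prime_mul (p q : ℕ) (hp : p.Prime) (hq : q.Prime) (hpq : p ≠ q) :
    sigma 2 (p * q) = (1 + p ^ 2) * (1 + q ^ 2) := by
  have hc : Nat.Coprime p q := (Nat.coprime_primes hp hq).mpr hpq
  rw [isMultiplicative_sigma.map_mul_of_coprime hc]
  rw [sigma_apply, sigma_apply, hp.divisors, hq.divisors]
  rw [Finset.sum_pair hp.one_lt.ne, Finset.sum_pair hq.one_lt.ne]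
  ring

theorem stmt_4 (P : ℤ) (hsf : Squarefree (P ^ 2 + 4))
    (A B : ℤ) (hA : A = P ^ 2 + 2) (hB : B = P ^ 4 + 4 * P ^ 2 + 1)
    (n : ℕ) (hn : 0 < n) (hbig : (n : ℤ) > (|A| + |B|) ^ 3)
    (heq : ((ArithmeticFunction.sigma 2) n : ℤ) - (n : ℤ) ^ 2 = A * n + B) :
    ∃ k : ℕ, 1 ≤ k ∧
      (n : ℤ) = lucasV P (-1) (2 * k - 1) * lucasV P (-1) (2 * k + 1) ∧
      Prime (lucasV P (-1) (2 * k - 1)) ∧ Prime (lucasV P (-1) (2 * k + 1)) := by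
  have hP0 : P ≠ 0 := by
    rintro rfl
    have h4 := hsf 2 (by norm_num)
    norm_num [Int.isUnit_iff] at h4
  have hP2 : 1 ≤ P ^ 2 := by
    have : 0 < P ^ 2 := by positivity
    omega
  have hA3 : 3 ≤ A := by omega
  have hB6 : 6 ≤ B := by nlinarith
  -- natural number versions
  set a : ℕ := A.toNat with ha
  set b : ℕ := B.toNat with hb
  have haA : (a : ℤ) = A := Int.toNat_of_nonneg (by omega)
  have hbB : (b : ℤ) = B := Int.toNat_of_nonneg (by omega)
  have ha3 : 3 ≤ a := by omega
  have hb6 : 6 ≤ b := by omega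
  have hsig : (ArithmeticFunction.sigma 2) n = n ^ 2 + a * n + b := by
    have : (((ArithmeticFunction.sigma 2) n : ℕ) : ℤ) = ((n ^ 2 + a * n + b : ℕ) : ℤ) := by
      push_cast
      rw [haA, hbB]
      linarith [heq]
    exact_mod_cast this
  have hnbig : (a + b) ^ 3 < n := by
    have : ((a + b : ℕ) : ℤ) ^ 3 < (n : ℤ) := by
      rw [abs_of_nonneg (by omega : (0:ℤ) ≤ A), abs_of_nonneg (by omega : (0:ℤ) ≤ B)] at hbig
      push_cast
      rw [haA, hbB]
      exact hbig
    exact_mod_cast this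
  have hn2 : 2 ≤ n := by
    have h9 : 9 ≤ a + b := by omega
    have : 9 ^ 3 ≤ (a + b) ^ 3 := Nat.pow_le_pow_left h9 3
    omega
  -- every prime factor r of n satisfies n < r^3
  have key : ∀ r : ℕ, r.Prime → r ∣ n → n < r ^ 3 := by
    intro r hr hrn
    obtain ⟨d, hd⟩ := hrn
    have hd_dvd : d ∣ n := ⟨r, by rw [hd]; ring⟩
    have hr2 : 2 ≤ r := hr.two_le
    have hdn : d ≠ n := by
      rintro rfl
      nlinarith
    have hlb := sigma2_lb n d hn hd_dvd hdn
    rw [hsig] at hlb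
    have hd2 : d ^ 2 ≤ (a + b) * n := by nlinarith
    have hd6 : d ^ 6 ≤ ((a + b) * n) ^ 3 := by
      calc d ^ 6 = (d ^ 2) ^ 3 := by ring
        _ ≤ ((a + b) * n) ^ 3 := Nat.pow_le_pow_left hd2 3
    have hd6' : d ^ 6 < n ^ 4 := by
      calc d ^ 6 ≤ (a + b) ^ 3 * n ^ 3 := by rw [mul_pow] at hd6; exact hd6
        _ < n * n ^ 3 := by
            apply Nat.mul_lt_mul_of_lt_of_le hnbig (le_refl _)
            positivity
        _ = n ^ 4 := by ring
    by_contra hcon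
    push_neg at hcon
    have hr6 : r ^ 6 ≤ n ^ 2 := by
      calc r ^ 6 = (r ^ 3) ^ 2 := by ring
        _ ≤ n ^ 2 := Nat.pow_le_pow_left hcon 2
    have : n ^ 6 < n ^ 6 := by
      calc n ^ 6 = r ^ 6 * d ^ 6 := by rw [hd]; ring
        _ ≤ n ^ 2 * d ^ 6 := Nat.mul_le_mul_right _ hr6
        _ < n ^ 2 * n ^ 4 := by
            apply Nat.mul_lt_mul_of_le_of_lt (le_refl _) hd6'
            positivity
        _ = n ^ 6 := by ring
    omega
  -- n is not prime
  have hnp : ¬ n.Prime := by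
    intro hp
    have := sigma2_prime n hp
    rw [hsig] at this
    have h3n : 3 * n ≤ a * n := Nat.mul_le_mul_right _ ha3
    omega
  obtain ⟨p, hpdef⟩ : ∃ p, p = n.minFac := ⟨_, rfl⟩
  have hp : p.Prime := hpdef ▸ Nat.minFac_prime (by omega)
  have hpn : p ∣ n := hpdef ▸ Nat.minFac_dvd n
  obtain ⟨q, hqdef⟩ : ∃ q, q = n / p := ⟨_, rfl⟩
  have hnpq : n = p * q := by rw [hqdef]; exact (Nat.mul_div_cancel' hpn).symm
  have hq1 : q ≠ 1 := by
    rintro hq1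
    rw [hq1, mul_one] at hnpq
    exact hnp (hnpq ▸ hp)
  have hq0 : q ≠ 0 := by
    rintro rfl
    rw [mul_zero] at hnpq; omega
  have hqn : q ∣ n := ⟨p, by rw [hnpq]; ring⟩
  by_cases hqprime : q.Prime
  · -- n = p * q with both prime
    by_cases hpq : p = q
    · -- n = p^2, contradiction
      exfalso
      subst hpq
      have hsq : n = p ^ 2 := by rw [hnpq]; ring
      have := sigma2_prime_sq p hp
      rw [← hsq, hsig] at this
      have h1 : 1 + p ^ 2 = a * n + b := by
        have hn2' : n ^ 2 = p ^ 4 := by rw [hsq]; ring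
        omega
      have h3 : 3 * n ≤ a * n := Nat.mul_le_mul_right _ ha3
      have hple : p ^ 2 = n := hsq.symm
      omega
    · -- the genuine case
      have hplt : p < q := by
        have := hpdef ▸ Nat.minFac_le_of_dvd hqprime.two_le hqn
        omega
      have hsig2 := sigma2_prime_mul p q hp hqprime hpq
      rw [← hnpq, hsig] at hsig2
      have hEnat : 1 + p ^ 2 + q ^ 2 = a * n + b := by
        have hexp : (1 + p ^ 2) * (1 + q ^ 2) = 1 + p ^ 2 + q ^ 2 + n ^ 2 := by
          rw [hnpq]; ring
        omega
      -- to integers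
      have hEint : (p:ℤ) ^ 2 - (P ^ 2 + 2) * (p:ℤ) * (q:ℤ) + (q:ℤ) ^ 2
          = (P ^ 2 + 2) ^ 2 - 4 := by
        have hc : ((1 + p ^ 2 + q ^ 2 : ℕ) : ℤ) = ((a * n + b : ℕ) : ℤ) := by
          exact_mod_cast hEnat
        push_cast at hc
        rw [haA, hbB] at hc
        have hnc : (n : ℤ) = (p : ℤ) * (q : ℤ)  := by exact_mod_cast hnpq
        rw [hnc] at hc
        simp only [hA, hB] at hc
        linear_combination hc
      have hp1 : (1:ℤ) ≤ (p:ℤ) := by exact_mod_cast hp.one_lt.le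
      have hpq' : (p:ℤ) ≤ (q:ℤ) := by exact_mod_cast hplt.le
      have hprimeP : Prime ((p:ℤ)) := Int.prime_iff_natAbs_prime.mpr (by simpa using hp)
      have hprimeQ : Prime ((q:ℤ)) := Int.prime_iff_natAbs_prime.mpr (by simpa using hqprime)
      have hnc : (n : ℤ) = (p : ℤ) * (q : ℤ) := by exact_mod_cast hnpq
      rcases le_or_gt 1 P with hPpos | hPneg
      · obtain ⟨k, hk, h1, h2⟩ := classify P hPpos hsf (p:ℤ).natAbs (p:ℤ) (q:ℤ)
          (le_refl _) hp1 hpq' hEint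
        exact ⟨k, hk, by rw [hnc, h1, h2], h1 ▸ hprimeP, h2 ▸ hprimeQ⟩
      · -- P negative
        have hP'pos : 1 ≤ -P := by omega
        have hsf' : Squarefree ((-P) ^ 2 + 4) := by rwa [neg_pow, Even.neg_one_pow (by decide), one_mul]
        have hEint' : (p:ℤ) ^ 2 - ((-P) ^ 2 + 2) * (p:ℤ) * (q:ℤ) + (q:ℤ) ^ 2
            = ((-P) ^ 2 + 2) ^ 2 - 4 := by
          have : (-P) ^ 2 = P ^ 2 := by ring
          rw [this]; exact hEint
        obtain ⟨k, hk, h1, h2⟩ := classify (-P) hP'pos hsf' (p:ℤ).natAbs (p:ℤ) (q:ℤ)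
          (le_refl _) hp1 hpq' hEint'
        rw [lucasV_neg] at h1 h2
        have hodd1 : (-1:ℤ) ^ (2 * k - 1) = -1 := by
          have : 2 * k - 1 = 2 * (k - 1) + 1 := by omega
          rw [this, pow_succ, pow_mul]
          norm_num
        have hodd2 : (-1:ℤ) ^ (2 * k + 1) = -1 := by
          rw [pow_succ, pow_mul]
          norm_num
        rw [hodd1] at h1
        rw [hodd2] at h2
        refine ⟨k, hk, ?_, ?_, ?_⟩
        · rw [hnc]
          have e1 : lucasV P (-1) (2 * k - 1) = -(p:ℤ) := by linarith
          have e2 : lucasV P (-1) (2 * k + 1) = -(q:ℤ) := by linarith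
          rw [e1, e2]; ring
        · have e1 : lucasV P (-1) (2 * k - 1) = -(p:ℤ) := by linarith
          rw [e1]; exact hprimeP.neg
        · have e2 : lucasV P (-1) (2 * k + 1) = -(q:ℤ) := by linarith
          rw [e2]; exact hprimeQ.neg
  · -- q composite: contradiction
    exfalso
    have hq2 : 2 ≤ q := by omega
    obtain ⟨r, hrdef⟩ : ∃ r, r = q.minFac := ⟨_, rfl⟩
    have hr : r.Prime := hrdef ▸ Nat.minFac_prime hq1
    have hrq : r ∣ q := hrdef ▸ Nat.minFac_dvd q
    obtain ⟨s, hsdef⟩ : ∃ s, s = q / r := ⟨_, rfl⟩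
    have hqrs : q = r * s := by rw [hsdef]; exact (Nat.mul_div_cancel' hrq).symm
    have hs1 : s ≠ 1 := by
      rintro hs1
      rw [hs1, mul_one] at hqrs
      exact hqprime (hqrs ▸ hr)
    have hs0 : s ≠ 0 := by
      rintro rfl
      rw [mul_zero] at hqrs; omega
    have hs2 : 2 ≤ s := by omega
    obtain ⟨t, htdef⟩ : ∃ t, t = s.minFac := ⟨_, rfl⟩
    have ht : t.Prime := htdef ▸ Nat.minFac_prime hs1
    have hts : t ∣ s := htdef ▸ Nat.minFac_dvd s
    have htle : t ≤ s := htdef ▸ Nat.minFac_le (by omega)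
    have hrn : r ∣ n := hrq.trans hqn
    have hsq' : s ∣ q := ⟨r, by rw [hqrs]; ring⟩
    have hsn : s ∣ n := hsq'.trans hqn
    have htn : t ∣ n := hts.trans hsn
    have k1 := key p hp hpn
    have k2 := key r hr hrn
    have k3 := key t ht htn
    have k3' : n < s ^ 3 := lt_of_lt_of_le k3 (Nat.pow_le_pow_left htle 3)
    have hnprs : n = p * r * s := by rw [hnpq, hqrs]; ring
    have hp2 : 2 ≤ p := hp.two_le
    have hr2 : 2 ≤ r := hr.two_le
    have e1 : r * s < p ^ 2 := by
      have : p * (r * s) < p * p ^ 2 := by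
        calc p * (r * s) = n := by rw [hnprs]; ring
          _ < p ^ 3 := k1
          _ = p * p ^ 2 := by ring
      exact Nat.lt_of_mul_lt_mul_left this
    have e2 : p * s < r ^ 2 := by
      have : r * (p * s) < r * r ^ 2 := by
        calc r * (p * s) = n := by rw [hnprs]; ring
          _ < r ^ 3 := k2
          _ = r * r ^ 2 := by ring
      exact Nat.lt_of_mul_lt_mul_left this
    have e3 : p * r < s ^ 2 := by
      have : s * (p * r) < s * s ^ 2 := by
        calc s * (p * r) = n := by rw [hnprs]; ring
          _ < s ^ 3 := k3'
          _ = s * s ^ 2 := by ring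
      exact Nat.lt_of_mul_lt_mul_left this
    have g : (r * s + 1) * ((p * s + 1) * (p * r + 1)) ≤ p ^ 2 * (r ^ 2 * s ^ 2) :=
      Nat.mul_le_mul e1 (Nat.mul_le_mul e2 e3)
    have hlt : r * s * ((p * s) * (p * r)) < (r * s + 1) * ((p * s + 1) * (p * r + 1)) := by
      apply Nat.mul_lt_mul_of_lt_of_le (Nat.lt_succ_self _)
        (Nat.mul_le_mul (Nat.le_succ _) (Nat.le_succ _))
      positivity
    have heq6 : r * s * ((p * s) * (p * r)) = p ^ 2 * (r ^ 2 * s ^ 2) := by ring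
    linarith [g, hlt, heq6]
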